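/- Let N ≥ 1 be a natural number, let Ω ⊆ ℝ^N be an open set, and let 0 < s₁ < s₂ < 1. Then there exists a constant c > 0, depending only on N, s₁ and s₂, such that for every measurable function u : Ω → ℝ with ∫_Ω |u|² dx < ∞ and [u]_{s₂,Ω} < ∞, one has [u]_{s₁,Ω} ≤ c · (∫_Ω |u|² dx)^{(1 − s₁/s₂)/2} · [u]_{s₂,Ω}^{s₁/s₂}. -/

import Mathlib

open MeasureTheory Real Set

/-- The squared Gagliardo seminorm of order `s` on an open set `Ω ⊆ ℝ^N`:
`[u]_{s,Ω}² = ∫_Ω ∫_Ω |u x - u y|² / |x - y|^{N+2s} dx dy`. -/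
noncomputable def gagliardoSqOn (N : ℕ) (s : ℝ) (Ω : Set (EuclideanSpace ℝ (Fin N)))
    (u : EuclideanSpace ℝ (Fin N) → ℝ) : ℝ :=
  ∫ p in Ω ×ˢ Ω, (u p.1 - u p.2) ^ 2 / ‖p.1 - p.2‖ ^ ((N : ℝ) + 2 * s)

section Aux

/-- Optimization over `ρ` plus a limiting argument. -/
private lemma aux_opt {s₁ s₂ K A B G : ℝ} (hs₁ : 0 < s₁) (h₁₂ : s₁ < s₂) (hK : 0 ≤ K)
    (hA : 0 ≤ A) (hB : 0 ≤ B)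
    (h : ∀ ρ : ℝ, 0 < ρ → G ≤ ρ ^ (2 * (s₂ - s₁)) * B + K * ρ ^ (-(2 * s₁)) * A) :
    G ≤ (1 + K) * A ^ (1 - s₁ / s₂) * B ^ (s₁ / s₂) := by
  have hs₂ : 0 < s₂ := hs₁.trans h₁₂
  have hθ0 : 0 < s₁ / s₂ := div_pos hs₁ hs₂
  have hθ1 : s₁ / s₂ < 1 := (div_lt_one hs₂).mpr h₁₂
  set θ := s₁ / s₂ with hθ
  have step1 : ∀ ε : ℝ, 0 < ε → G ≤ (1 + K) * (A + ε) ^ (1 - θ) * (B + ε) ^ θ := by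
    intro ε hε
    have hP : 0 < A + ε := by linarith
    have hQ : 0 < B + ε := by linarith
    have hPQ : 0 < (A + ε) / (B + ε) := div_pos hP hQ
    set ρ : ℝ := ((A + ε) / (B + ε)) ^ (1 / (2 * s₂)) with hρdef
    have hρ : 0 < ρ := rpow_pos_of_pos hPQ _
    have e1 : ρ ^ (2 * (s₂ - s₁)) = (A + ε) ^ (1 - θ) * (B + ε) ^ (θ - 1) := by
      rw [hρdef, ← Real.rpow_mul hPQ.le]
      have he : 1 / (2 * s₂) * (2 * (s₂ - s₁)) = 1 - θ := by
        field_simp [hθ]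
        rw [hθ, mul_one_sub, mul_div_cancel₀ s₁ hs₂.ne']
      rw [he, Real.div_rpow hP.le hQ.le, div_eq_mul_inv, ← Real.rpow_neg hQ.le, neg_sub]
    have e2 : ρ ^ (-(2 * s₁)) = (A + ε) ^ (-θ) * (B + ε) ^ θ := by
      rw [hρdef, ← Real.rpow_mul hPQ.le]
      have he : 1 / (2 * s₂) * (-(2 * s₁)) = -θ := by
        field_simp [hθ]
        rw [hθ, mul_div_cancel₀ s₁ hs₂.ne']
      rw [he, Real.div_rpow hP.le hQ.le, div_eq_mul_inv, ← Real.rpow_neg hQ.le, neg_neg]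
    have eQ : (B + ε) ^ (θ - 1) * (B + ε) = (B + ε) ^ θ := by
      rw [← Real.rpow_add_one hQ.ne', sub_add_cancel]
    have eP : (A + ε) ^ (-θ) * (A + ε) = (A + ε) ^ (1 - θ) := by
      rw [← Real.rpow_add_one hP.ne', neg_add_eq_sub]
    calc G ≤ ρ ^ (2 * (s₂ - s₁)) * B + K * ρ ^ (-(2 * s₁)) * A := h ρ hρ
      _ ≤ ρ ^ (2 * (s₂ - s₁)) * (B + ε) + K * ρ ^ (-(2 * s₁)) * (A + ε) := by
          have h1 : 0 ≤ ρ ^ (2 * (s₂ - s₁)) := by positivity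
          have h2 : 0 ≤ ρ ^ (-(2 * s₁)) := by positivity
          gcongr <;> linarith
      _ = (A + ε) ^ (1 - θ) * ((B + ε) ^ (θ - 1) * (B + ε)) +
            K * ((A + ε) ^ (-θ) * (A + ε)) * (B + ε) ^ θ := by rw [e1, e2]; ring
      _ = (1 + K) * (A + ε) ^ (1 - θ) * (B + ε) ^ θ := by rw [eQ, eP]; ring
  have hlim : Filter.Tendsto (fun ε : ℝ => (1 + K) * (A + ε) ^ (1 - θ) * (B + ε) ^ θ)
      (nhdsWithin 0 (Ioi 0)) (nhds ((1 + K) * A ^ (1 - θ) * B ^ θ)) := by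
    have hA' : Filter.Tendsto (fun ε : ℝ => A + ε) (nhdsWithin 0 (Ioi 0)) (nhds A) := by
      have : Filter.Tendsto (fun ε : ℝ => A + ε) (nhds 0) (nhds (A + 0)) :=
        (continuous_const.add continuous_id).tendsto 0
      simpa using this.mono_left nhdsWithin_le_nhds
    have hB' : Filter.Tendsto (fun ε : ℝ => B + ε) (nhdsWithin 0 (Ioi 0)) (nhds B) := by
      have : Filter.Tendsto (fun ε : ℝ => B + ε) (nhds 0) (nhds (B + 0)) :=
        (continuous_const.add continuous_id).tendsto 0
      simpa using this.mono_left nhdsWithin_le_nhds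
    have h1 := ((Real.continuousAt_rpow_const A (1 - θ) (Or.inr (by linarith))).tendsto).comp hA'
    have h2 := ((Real.continuousAt_rpow_const B θ (Or.inr hθ0.le)).tendsto).comp hB'
    simpa [Function.comp_def] using (tendsto_const_nhds.mul h1).mul h2
  refine ge_of_tendsto hlim ?_
  filter_upwards [self_mem_nhdsWithin] with ε hε using step1 ε hε

/-- The tail integral `∫_{‖z‖ > ρ} ‖z‖^{-(N+2s)} dz`. -/
private lemma aux_tail {N : ℕ} (hN : 1 ≤ N) {s ρ : ℝ} (hs : 0 < s) (hρ : 0 < ρ) :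
    IntegrableOn (fun z : EuclideanSpace ℝ (Fin N) => ‖z‖ ^ (-((N : ℝ) + 2 * s)))
        {z | ρ < ‖z‖} volume ∧
      ∫ z in {z : EuclideanSpace ℝ (Fin N) | ρ < ‖z‖}, ‖z‖ ^ (-((N : ℝ) + 2 * s)) =
        ((N : ℝ) * (volume (Metric.ball (0 : EuclideanSpace ℝ (Fin N)) 1)).toReal / (2 * s)) *
          ρ ^ (-(2 * s)) := by
  haveI : Nontrivial (EuclideanSpace ℝ (Fin N)) := by
    have hfr : Module.finrank ℝ (EuclideanSpace ℝ (Fin N)) = N := finrank_euclideanSpace_fin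
    refine Module.nontrivial_of_finrank_pos (R := ℝ) ?_
    omega
  set q : ℝ := (N : ℝ) + 2 * s with hq
  have hq0 : 0 < q := by positivity
  have hqN : (N : ℝ) < q := by simp [hq]; linarith
  have hSmeas : MeasurableSet {z : EuclideanSpace ℝ (Fin N) | ρ < ‖z‖} :=
    measurableSet_lt measurable_const measurable_norm
  constructor
  · -- integrability by comparison with `(1 + ‖z‖)^(-q)`
    set C : ℝ := ((1 + ρ) / ρ) ^ q with hC
    have hC0 : 0 < C := by positivity
    have hint : Integrable (fun z : EuclideanSpace ℝ (Fin N) => C * (1 + ‖z‖) ^ (-q)) volume := by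
      refine (integrable_one_add_norm ?_).const_mul C
      rw [finrank_euclideanSpace_fin]; exact hqN
    refine (hint.integrableOn).mono' ?_ ?_
    · exact ((measurable_norm.pow_const _).aestronglyMeasurable)
    · filter_upwards [ae_restrict_mem hSmeas] with z hz
      have hz' : ρ < ‖z‖ := hz
      have hz0 : 0 < ‖z‖ := hρ.trans hz'
      have key : 1 + ‖z‖ ≤ (1 + ρ) / ρ * ‖z‖ := by
        rw [div_mul_eq_mul_div, le_div_iff₀ hρ]
        nlinarith
      have h1 : ((1 + ρ) / ρ * ‖z‖) ^ (-q) ≤ (1 + ‖z‖) ^ (-q) :=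
        Real.rpow_le_rpow_of_nonpos (by positivity) key (by linarith)
      have h2 : ((1 + ρ) / ρ * ‖z‖) ^ (-q) = C⁻¹ * ‖z‖ ^ (-q) := by
        rw [Real.mul_rpow (by positivity) hz0.le, hC, ← Real.rpow_neg (by positivity)]
      have h3 : ‖z‖ ^ (-q) ≤ C * (1 + ‖z‖) ^ (-q) := by
        have := mul_le_mul_of_nonneg_left h1 hC0.le
        rw [h2] at this
        calc ‖z‖ ^ (-q) = C * (C⁻¹ * ‖z‖ ^ (-q)) := by field_simp
          _ ≤ C * (1 + ‖z‖) ^ (-q) := this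
      calc ‖(‖z‖ ^ (-q))‖ = ‖z‖ ^ (-q) := by
            rw [Real.norm_eq_abs, abs_of_nonneg (Real.rpow_nonneg hz0.le _)]
        _ ≤ C * (1 + ‖z‖) ^ (-q) := h3
  · -- the value, via polar coordinates
    have hpolar := integral_fun_norm_addHaar (volume : Measure (EuclideanSpace ℝ (Fin N)))
      (Set.indicator (Ioi ρ) fun r : ℝ => r ^ (-q))
    have hdim : Module.finrank ℝ (EuclideanSpace ℝ (Fin N)) = N := finrank_euclideanSpace_fin
    rw [hdim] at hpolar
    have hL : (∫ x : EuclideanSpace ℝ (Fin N),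
        Set.indicator (Ioi ρ) (fun r : ℝ => r ^ (-q)) ‖x‖) =
        ∫ z in {z : EuclideanSpace ℝ (Fin N) | ρ < ‖z‖}, ‖z‖ ^ (-q) := by
      rw [← integral_indicator hSmeas]
      congr 1
    have hR : (∫ y in Ioi (0 : ℝ), y ^ (N - 1) •
        Set.indicator (Ioi ρ) (fun r : ℝ => r ^ (-q)) y) = ρ ^ ((N : ℝ) - q) / (q - N) := by
      have e1 : ∀ y : ℝ, y ^ (N - 1) • Set.indicator (Ioi ρ) (fun r : ℝ => r ^ (-q)) y =
          Set.indicator (Ioi ρ) (fun r : ℝ => r ^ (N - 1) * r ^ (-q)) y := by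
        intro y
        by_cases hy : y ∈ Ioi ρ <;> simp [Set.indicator_apply, hy, smul_eq_mul]
      simp_rw [e1]
      rw [setIntegral_indicator measurableSet_Ioi]
      have : Ioi (0 : ℝ) ∩ Ioi ρ = Ioi ρ := by
        rw [Set.Ioi_inter_Ioi, max_eq_right hρ.le]
      rw [this]
      have e2 : ∀ y ∈ Ioi ρ, y ^ (N - 1) * y ^ (-q) = y ^ ((N : ℝ) - 1 - q) := by
        intro y hy
        have hy0 : 0 < y := hρ.trans hy
        rw [← Real.rpow_natCast y (N - 1), ← Real.rpow_add hy0]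
        congr 1
        have : ((N - 1 : ℕ) : ℝ) = (N : ℝ) - 1 := by
          have : (1 : ℕ) ≤ N := hN
          push_cast [Nat.cast_sub this]
          ring
        rw [this]
        ring
      rw [setIntegral_congr_fun measurableSet_Ioi e2]
      rw [integral_Ioi_rpow_of_lt (by linarith) hρ]
      have hne : (N : ℝ) - 1 - q + 1 = (N : ℝ) - q := by ring
      rw [hne]
      rw [div_eq_div_iff (by linarith) (by linarith)]
      ring
    rw [hL] at hpolar
    rw [hpolar, hR]
    have : ρ ^ ((N : ℝ) - q) = ρ ^ (-(2 * s)) := by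
      congr 1
      simp [hq]
    rw [this]
    have hq2 : q - (N : ℝ) = 2 * s := by simp [hq]
    rw [hq2, nsmul_eq_mul, smul_eq_mul, measureReal_def]
    ring

end Aux

/-- Interpolation inequality for Gagliardo seminorms:
`[u]_{s₁,Ω} ≤ c ‖u‖_{L²(Ω)}^{1-s₁/s₂} [u]_{s₂,Ω}^{s₁/s₂}`. -/
theorem stmt_0 (N : ℕ) (hN : 1 ≤ N) (s₁ s₂ : ℝ)
    (hs₁ : 0 < s₁) (h₁₂ : s₁ < s₂) (hs₂ : s₂ < 1) :
    ∃ c : ℝ, 0 < c ∧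
      ∀ (Ω : Set (EuclideanSpace ℝ (Fin N))), IsOpen Ω →
      ∀ u : EuclideanSpace ℝ (Fin N) → ℝ, Measurable u →
      IntegrableOn (fun x => u x ^ 2) Ω volume →
      IntegrableOn
        (fun p : EuclideanSpace ℝ (Fin N) × EuclideanSpace ℝ (Fin N) =>
          (u p.1 - u p.2) ^ 2 / ‖p.1 - p.2‖ ^ ((N : ℝ) + 2 * s₂)) (Ω ×ˢ Ω) volume →
      Real.sqrt (gagliardoSqOn N s₁ Ω u) ≤
        c * (∫ x in Ω, u x ^ 2) ^ ((1 - s₁ / s₂) / 2) *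
          Real.sqrt (gagliardoSqOn N s₂ Ω u) ^ (s₁ / s₂) := by
  classical
  have hs₂0 : 0 < s₂ := hs₁.trans h₁₂
  set C₀ : ℝ := (N : ℝ) * (volume (Metric.ball (0 : EuclideanSpace ℝ (Fin N)) 1)).toReal /
    (2 * s₁) with hC₀def
  have hC₀0 : 0 ≤ C₀ := by positivity
  set K : ℝ := 4 * C₀ with hKdef
  have hK0 : 0 ≤ K := by positivity
  refine ⟨Real.sqrt (1 + K), Real.sqrt_pos.mpr (by linarith), ?_⟩
  intro Ω hΩ u hu hA2 hB2
  have hΩm : MeasurableSet Ω := hΩ.measurableSet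
  have hmF : ∀ s : ℝ, Measurable (fun p : EuclideanSpace ℝ (Fin N) × EuclideanSpace ℝ (Fin N) =>
      (u p.1 - u p.2) ^ 2 / ‖p.1 - p.2‖ ^ ((N : ℝ) + 2 * s)) := by
    intro s
    exact (((hu.comp measurable_fst).sub (hu.comp measurable_snd)).pow_const 2).div
      ((measurable_fst.sub measurable_snd).norm.pow_const _)
  have hnnF : ∀ s : ℝ, ∀ p : EuclideanSpace ℝ (Fin N) × EuclideanSpace ℝ (Fin N),
      0 ≤ (u p.1 - u p.2) ^ 2 / ‖p.1 - p.2‖ ^ ((N : ℝ) + 2 * s) := fun s p =>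
    div_nonneg (sq_nonneg _) (Real.rpow_nonneg (norm_nonneg _) _)
  set L₁ := ∫⁻ p in Ω ×ˢ Ω,
    ENNReal.ofReal ((u p.1 - u p.2) ^ 2 / ‖p.1 - p.2‖ ^ ((N : ℝ) + 2 * s₁)) with hL₁def
  set L₂ := ∫⁻ p in Ω ×ˢ Ω,
    ENNReal.ofReal ((u p.1 - u p.2) ^ 2 / ‖p.1 - p.2‖ ^ ((N : ℝ) + 2 * s₂)) with hL₂def
  set LA := ∫⁻ x in Ω, ENNReal.ofReal (u x ^ 2) with hLAdef
  have hGs₁ : gagliardoSqOn N s₁ Ω u = L₁.toReal :=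
    integral_eq_lintegral_of_nonneg_ae (ae_of_all _ (hnnF s₁)) (hmF s₁).aestronglyMeasurable
  have hGs₂ : gagliardoSqOn N s₂ Ω u = L₂.toReal :=
    integral_eq_lintegral_of_nonneg_ae (ae_of_all _ (hnnF s₂)) (hmF s₂).aestronglyMeasurable
  have hAeq : (∫ x in Ω, u x ^ 2) = LA.toReal :=
    integral_eq_lintegral_of_nonneg_ae (ae_of_all _ fun x => sq_nonneg _)
      (hu.pow_const 2).aestronglyMeasurable
  have hLAfin : LA ≠ ⊤ := hA2.lintegral_lt_top.ne
  have hL₂fin : L₂ ≠ ⊤ := hB2.lintegral_lt_top.ne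
  have hprod : volume.restrict (Ω ×ˢ Ω) = (volume.restrict Ω).prod (volume.restrict Ω) := by
    rw [Measure.prod_restrict, ← Measure.volume_eq_prod]
  -- the core estimate
  have est : ∀ ρ : ℝ, 0 < ρ →
      L₁ ≤ ENNReal.ofReal (ρ ^ (2 * (s₂ - s₁))) * L₂ +
        ENNReal.ofReal (K * ρ ^ (-(2 * s₁))) * LA := by
    intro ρ hρ
    have hSmeas : MeasurableSet {z : EuclideanSpace ℝ (Fin N) | ρ < ‖z‖} :=
      measurableSet_lt measurable_const measurable_norm
    set g : EuclideanSpace ℝ (Fin N) → ENNReal :=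
      fun z => Set.indicator {z : EuclideanSpace ℝ (Fin N) | ρ < ‖z‖}
        (fun z => ENNReal.ofReal (‖z‖ ^ (-((N : ℝ) + 2 * s₁)))) z with hgdef
    have hgmeas : Measurable g :=
      Measurable.indicator (measurable_norm.pow_const _).ennreal_ofReal hSmeas
    obtain ⟨htail_int, htail_val⟩ := aux_tail (N := N) hN hs₁ hρ
    have hIg : ∫⁻ z, g z = ENNReal.ofReal (C₀ * ρ ^ (-(2 * s₁))) := by
      rw [hgdef]
      rw [lintegral_indicator hSmeas]
      rw [← ofReal_integral_eq_lintegral_ofReal htail_int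
        (ae_of_all _ fun z => Real.rpow_nonneg (norm_nonneg _) _)]
      rw [htail_val]
    have h2LA : (∫⁻ x in Ω, ENNReal.ofReal (2 * u x ^ 2)) = 2 * LA := by
      calc (∫⁻ x in Ω, ENNReal.ofReal (2 * u x ^ 2))
          = ∫⁻ x in Ω, 2 * ENNReal.ofReal (u x ^ 2) := by
            refine lintegral_congr fun x => ?_
            rw [ENNReal.ofReal_mul (by norm_num : (0:ℝ) ≤ 2)]
            norm_num
        _ = 2 * LA := lintegral_const_mul 2 (hu.pow_const 2).ennreal_ofReal
    have hm1 : Measurable (fun p : EuclideanSpace ℝ (Fin N) × EuclideanSpace ℝ (Fin N) =>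
        ENNReal.ofReal (2 * u p.1 ^ 2) * g (p.1 - p.2)) :=
      ((measurable_const.mul ((hu.comp measurable_fst).pow_const 2)).ennreal_ofReal).mul
        (hgmeas.comp (measurable_fst.sub measurable_snd))
    have hm2 : Measurable (fun p : EuclideanSpace ℝ (Fin N) × EuclideanSpace ℝ (Fin N) =>
        ENNReal.ofReal (2 * u p.2 ^ 2) * g (p.1 - p.2)) :=
      ((measurable_const.mul ((hu.comp measurable_snd).pow_const 2)).ennreal_ofReal).mul
        (hgmeas.comp (measurable_fst.sub measurable_snd))
    have hT₁ : (∫⁻ p in Ω ×ˢ Ω, ENNReal.ofReal (2 * u p.1 ^ 2) * g (p.1 - p.2)) ≤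
        ENNReal.ofReal (C₀ * ρ ^ (-(2 * s₁))) * (2 * LA) := by
      rw [hprod, lintegral_prod _ hm1.aemeasurable]
      calc (∫⁻ x in Ω, ∫⁻ y in Ω, ENNReal.ofReal (2 * u x ^ 2) * g (x - y))
          = ∫⁻ x in Ω, ENNReal.ofReal (2 * u x ^ 2) * ∫⁻ y in Ω, g (x - y) :=
            lintegral_congr fun x =>
              lintegral_const_mul _ (hgmeas.comp (measurable_const.sub measurable_id))
        _ ≤ ∫⁻ x in Ω, ENNReal.ofReal (2 * u x ^ 2) * ENNReal.ofReal (C₀ * ρ ^ (-(2 * s₁))) := by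
            refine lintegral_mono fun x => mul_le_mul_right ?_ _
            calc (∫⁻ y in Ω, g (x - y)) ≤ ∫⁻ y, g (x - y) := setLIntegral_le_lintegral _ _
              _ = ∫⁻ z, g z :=
                  (Measure.measurePreserving_sub_left volume x).lintegral_comp hgmeas
              _ = ENNReal.ofReal (C₀ * ρ ^ (-(2 * s₁))) := hIg
        _ = ENNReal.ofReal (C₀ * ρ ^ (-(2 * s₁))) * (2 * LA) := by
            rw [lintegral_mul_const (f := fun x => ENNReal.ofReal (2 * u x ^ 2)) _
                (measurable_const.mul (hu.pow_const 2)).ennreal_ofReal,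
              h2LA, mul_comm]
    have hT₂ : (∫⁻ p in Ω ×ˢ Ω, ENNReal.ofReal (2 * u p.2 ^ 2) * g (p.1 - p.2)) ≤
        ENNReal.ofReal (C₀ * ρ ^ (-(2 * s₁))) * (2 * LA) := by
      rw [hprod, lintegral_prod_symm _ hm2.aemeasurable]
      calc (∫⁻ y in Ω, ∫⁻ x in Ω, ENNReal.ofReal (2 * u y ^ 2) * g (x - y))
          = ∫⁻ y in Ω, ENNReal.ofReal (2 * u y ^ 2) * ∫⁻ x in Ω, g (x - y) :=
            lintegral_congr fun y =>
              lintegral_const_mul _ (hgmeas.comp (measurable_id.sub measurable_const))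
        _ ≤ ∫⁻ y in Ω, ENNReal.ofReal (2 * u y ^ 2) * ENNReal.ofReal (C₀ * ρ ^ (-(2 * s₁))) := by
            refine lintegral_mono fun y => mul_le_mul_right ?_ _
            calc (∫⁻ x in Ω, g (x - y)) ≤ ∫⁻ x, g (x - y) := setLIntegral_le_lintegral _ _
              _ = ∫⁻ z, g z := lintegral_sub_right_eq_self g y
              _ = ENNReal.ofReal (C₀ * ρ ^ (-(2 * s₁))) := hIg
        _ = ENNReal.ofReal (C₀ * ρ ^ (-(2 * s₁))) * (2 * LA) := by
            rw [lintegral_mul_const (f := fun x => ENNReal.ofReal (2 * u x ^ 2)) _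
                (measurable_const.mul (hu.pow_const 2)).ennreal_ofReal,
              h2LA, mul_comm]
    have key : ∀ p : EuclideanSpace ℝ (Fin N) × EuclideanSpace ℝ (Fin N),
        ENNReal.ofReal ((u p.1 - u p.2) ^ 2 / ‖p.1 - p.2‖ ^ ((N : ℝ) + 2 * s₁)) ≤
          ENNReal.ofReal (ρ ^ (2 * (s₂ - s₁))) *
              ENNReal.ofReal ((u p.1 - u p.2) ^ 2 / ‖p.1 - p.2‖ ^ ((N : ℝ) + 2 * s₂)) +
            (ENNReal.ofReal (2 * u p.1 ^ 2) * g (p.1 - p.2) +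
              ENNReal.ofReal (2 * u p.2 ^ 2) * g (p.1 - p.2)) := by
      intro p
      have hr0 : (0:ℝ) ≤ ‖p.1 - p.2‖ := norm_nonneg _
      by_cases hrρ : ρ < ‖p.1 - p.2‖
      · have hgr : g (p.1 - p.2) = ENNReal.ofReal (‖p.1 - p.2‖ ^ (-((N : ℝ) + 2 * s₁))) := by
          rw [hgdef]
          exact Set.indicator_of_mem
            (show p.1 - p.2 ∈ {z : EuclideanSpace ℝ (Fin N) | ρ < ‖z‖} from hrρ) _
        have hrpos : (0:ℝ) < ‖p.1 - p.2‖ := hρ.trans hrρ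
        have hreal : (u p.1 - u p.2) ^ 2 / ‖p.1 - p.2‖ ^ ((N : ℝ) + 2 * s₁) ≤
            2 * u p.1 ^ 2 * ‖p.1 - p.2‖ ^ (-((N : ℝ) + 2 * s₁)) +
              2 * u p.2 ^ 2 * ‖p.1 - p.2‖ ^ (-((N : ℝ) + 2 * s₁)) := by
          rw [Real.rpow_neg hr0, div_eq_mul_inv]
          have hnum : (u p.1 - u p.2) ^ 2 ≤ 2 * u p.1 ^ 2 + 2 * u p.2 ^ 2 := by
            nlinarith [sq_nonneg (u p.1 + u p.2)]
          have hinv : (0:ℝ) ≤ (‖p.1 - p.2‖ ^ ((N : ℝ) + 2 * s₁))⁻¹ := by positivity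
          nlinarith [mul_le_mul_of_nonneg_right hnum hinv]
        calc ENNReal.ofReal ((u p.1 - u p.2) ^ 2 / ‖p.1 - p.2‖ ^ ((N : ℝ) + 2 * s₁))
            ≤ ENNReal.ofReal (2 * u p.1 ^ 2 * ‖p.1 - p.2‖ ^ (-((N : ℝ) + 2 * s₁)) +
                2 * u p.2 ^ 2 * ‖p.1 - p.2‖ ^ (-((N : ℝ) + 2 * s₁))) :=
              ENNReal.ofReal_le_ofReal hreal
          _ = ENNReal.ofReal (2 * u p.1 ^ 2) * g (p.1 - p.2) +
                ENNReal.ofReal (2 * u p.2 ^ 2) * g (p.1 - p.2) := by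
              rw [ENNReal.ofReal_add (by positivity) (by positivity), hgr,
                ENNReal.ofReal_mul (by positivity : (0:ℝ) ≤ 2 * u p.1 ^ 2),
                ENNReal.ofReal_mul (by positivity : (0:ℝ) ≤ 2 * u p.2 ^ 2)]
          _ ≤ _ := self_le_add_left _ _
      · push_neg at hrρ
        have hg0 : g (p.1 - p.2) = 0 := Set.indicator_of_notMem (by simpa using hrρ.not_gt) _
        refine le_trans ?_ le_self_add
        rw [← ENNReal.ofReal_mul (by positivity : (0:ℝ) ≤ ρ ^ (2 * (s₂ - s₁)))]
        refine ENNReal.ofReal_le_ofReal ?_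
        rcases eq_or_lt_of_le hr0 with h0 | hrpos
        · rw [← h0, Real.zero_rpow (by positivity : (0:ℝ) < (N : ℝ) + 2 * s₁).ne',
            Real.zero_rpow (by positivity : (0:ℝ) < (N : ℝ) + 2 * s₂).ne']
          simp
        · have e : ‖p.1 - p.2‖ ^ ((N : ℝ) + 2 * s₂) =
              ‖p.1 - p.2‖ ^ ((N : ℝ) + 2 * s₁) * ‖p.1 - p.2‖ ^ (2 * (s₂ - s₁)) := by
            rw [← Real.rpow_add hrpos]
            congr 1
            ring
          have h1 : ‖p.1 - p.2‖ ^ (2 * (s₂ - s₁)) ≤ ρ ^ (2 * (s₂ - s₁)) :=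
            Real.rpow_le_rpow hr0 hrρ (by linarith)
          have hrApos : (0:ℝ) < ‖p.1 - p.2‖ ^ (2 * (s₂ - s₁)) := Real.rpow_pos_of_pos hrpos _
          rw [e]
          have estep : (u p.1 - u p.2) ^ 2 / ‖p.1 - p.2‖ ^ ((N : ℝ) + 2 * s₁) =
              (u p.1 - u p.2) ^ 2 * ‖p.1 - p.2‖ ^ (2 * (s₂ - s₁)) /
                (‖p.1 - p.2‖ ^ ((N : ℝ) + 2 * s₁) * ‖p.1 - p.2‖ ^ (2 * (s₂ - s₁))) := by
            rw [mul_div_mul_right _ _ hrApos.ne']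
          rw [estep]
          calc (u p.1 - u p.2) ^ 2 * ‖p.1 - p.2‖ ^ (2 * (s₂ - s₁)) /
                (‖p.1 - p.2‖ ^ ((N : ℝ) + 2 * s₁) * ‖p.1 - p.2‖ ^ (2 * (s₂ - s₁)))
              ≤ (u p.1 - u p.2) ^ 2 * ρ ^ (2 * (s₂ - s₁)) /
                (‖p.1 - p.2‖ ^ ((N : ℝ) + 2 * s₁) * ‖p.1 - p.2‖ ^ (2 * (s₂ - s₁))) := by
                gcongr
            _ = ρ ^ (2 * (s₂ - s₁)) * ((u p.1 - u p.2) ^ 2 /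
                (‖p.1 - p.2‖ ^ ((N : ℝ) + 2 * s₁) * ‖p.1 - p.2‖ ^ (2 * (s₂ - s₁)))) := by
                ring
    calc L₁ ≤ ∫⁻ p in Ω ×ˢ Ω, (ENNReal.ofReal (ρ ^ (2 * (s₂ - s₁))) *
            ENNReal.ofReal ((u p.1 - u p.2) ^ 2 / ‖p.1 - p.2‖ ^ ((N : ℝ) + 2 * s₂)) +
          (ENNReal.ofReal (2 * u p.1 ^ 2) * g (p.1 - p.2) +
            ENNReal.ofReal (2 * u p.2 ^ 2) * g (p.1 - p.2))) := lintegral_mono key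
      _ = ENNReal.ofReal (ρ ^ (2 * (s₂ - s₁))) * L₂ +
          ((∫⁻ p in Ω ×ˢ Ω, ENNReal.ofReal (2 * u p.1 ^ 2) * g (p.1 - p.2)) +
            (∫⁻ p in Ω ×ˢ Ω, ENNReal.ofReal (2 * u p.2 ^ 2) * g (p.1 - p.2))) := by
          rw [lintegral_add_left ((hmF s₂).ennreal_ofReal.const_mul _),
            lintegral_add_left hm1, lintegral_const_mul _ (hmF s₂).ennreal_ofReal]
      _ ≤ ENNReal.ofReal (ρ ^ (2 * (s₂ - s₁))) * L₂ +
          (ENNReal.ofReal (C₀ * ρ ^ (-(2 * s₁))) * (2 * LA) +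
            ENNReal.ofReal (C₀ * ρ ^ (-(2 * s₁))) * (2 * LA)) :=
          add_le_add_right (add_le_add hT₁ hT₂) _
      _ = ENNReal.ofReal (ρ ^ (2 * (s₂ - s₁))) * L₂ +
          ENNReal.ofReal (K * ρ ^ (-(2 * s₁))) * LA := by
          have h4 : ENNReal.ofReal (K * ρ ^ (-(2 * s₁))) =
              4 * ENNReal.ofReal (C₀ * ρ ^ (-(2 * s₁))) := by
            rw [hKdef, mul_assoc, ENNReal.ofReal_mul (by norm_num : (0:ℝ) ≤ 4)]
            norm_num
          rw [h4]
          ring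
  have hL₁fin : L₁ ≠ ⊤ := by
    refine ne_top_of_le_ne_top ?_ (est 1 one_pos)
    exact ENNReal.add_ne_top.mpr ⟨ENNReal.mul_ne_top ENNReal.ofReal_ne_top hL₂fin,
      ENNReal.mul_ne_top ENNReal.ofReal_ne_top hLAfin⟩
  have hrealest : ∀ ρ : ℝ, 0 < ρ → gagliardoSqOn N s₁ Ω u ≤
      ρ ^ (2 * (s₂ - s₁)) * gagliardoSqOn N s₂ Ω u +
        K * ρ ^ (-(2 * s₁)) * (∫ x in Ω, u x ^ 2) := by
    intro ρ hρ
    rw [hGs₁, hGs₂, hAeq]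
    calc L₁.toReal ≤ (ENNReal.ofReal (ρ ^ (2 * (s₂ - s₁))) * L₂ +
          ENNReal.ofReal (K * ρ ^ (-(2 * s₁))) * LA).toReal :=
        ENNReal.toReal_mono (ENNReal.add_ne_top.mpr
          ⟨ENNReal.mul_ne_top ENNReal.ofReal_ne_top hL₂fin,
            ENNReal.mul_ne_top ENNReal.ofReal_ne_top hLAfin⟩) (est ρ hρ)
      _ = ρ ^ (2 * (s₂ - s₁)) * L₂.toReal + K * ρ ^ (-(2 * s₁)) * LA.toReal := by
          rw [ENNReal.toReal_add (ENNReal.mul_ne_top ENNReal.ofReal_ne_top hL₂fin)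
            (ENNReal.mul_ne_top ENNReal.ofReal_ne_top hLAfin), ENNReal.toReal_mul,
            ENNReal.toReal_mul, ENNReal.toReal_ofReal (Real.rpow_nonneg hρ.le _),
            ENNReal.toReal_ofReal (mul_nonneg hK0 (Real.rpow_nonneg hρ.le _))]
  have hA0 : 0 ≤ ∫ x in Ω, u x ^ 2 := by
    rw [hAeq]; exact ENNReal.toReal_nonneg
  have hB0 : 0 ≤ gagliardoSqOn N s₂ Ω u := by
    rw [hGs₂]; exact ENNReal.toReal_nonneg
  have final : gagliardoSqOn N s₁ Ω u ≤
      (1 + K) * (∫ x in Ω, u x ^ 2) ^ (1 - s₁ / s₂) *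
        (gagliardoSqOn N s₂ Ω u) ^ (s₁ / s₂) :=
    aux_opt hs₁ h₁₂ hK0 hA0 hB0 hrealest
  have e1 : Real.sqrt ((∫ x in Ω, u x ^ 2) ^ (1 - s₁ / s₂)) =
      (∫ x in Ω, u x ^ 2) ^ ((1 - s₁ / s₂) / 2) := by
    rw [Real.sqrt_eq_rpow, ← Real.rpow_mul hA0]
    congr 1
    ring
  have e2 : Real.sqrt ((gagliardoSqOn N s₂ Ω u) ^ (s₁ / s₂)) =
      Real.sqrt (gagliardoSqOn N s₂ Ω u) ^ (s₁ / s₂) := by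
    rw [Real.sqrt_eq_rpow, Real.sqrt_eq_rpow, ← Real.rpow_mul hB0, ← Real.rpow_mul hB0,
      mul_comm]
  calc Real.sqrt (gagliardoSqOn N s₁ Ω u)
      ≤ Real.sqrt ((1 + K) * (∫ x in Ω, u x ^ 2) ^ (1 - s₁ / s₂) *
          (gagliardoSqOn N s₂ Ω u) ^ (s₁ / s₂)) := Real.sqrt_le_sqrt final
    _ = Real.sqrt (1 + K) * (∫ x in Ω, u x ^ 2) ^ ((1 - s₁ / s₂) / 2) *
          Real.sqrt (gagliardoSqOn N s₂ Ω u) ^ (s₁ / s₂) := by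
        rw [Real.sqrt_mul (by positivity), Real.sqrt_mul (by linarith : (0:ℝ) ≤ 1 + K),
          e1, e2]
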